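/- arXiv:1711.02871 — 2 statements merged into one kernel-verified Lean document; each statement's English description precedes it below -/
import Mathlib

section
/- Let r > 1 be a real number. Then the number of connected components of the topological closure of σ_{−r}(ℕ⁺) in ℝ is at least N_r + 1, where N_r is the number of r-mighty primes. -/
open scoped BigOperators

/-- The divisor function `σ_{-r}(n) = ∑_{d ∣ n} d^{-r}`. -/
noncomputable def sigmaNeg (r : ℝ) (n : ℕ) : ℝ := ∑ d ∈ n.divisors, (d : ℝ) ^ (-r)

/-- The range `σ_{-r}(ℕ⁺) = {σ_{-r}(n) : n ∈ ℕ⁺}`. -/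
def sigmaSet (r : ℝ) : Set ℝ := {x | ∃ n : ℕ, 0 < n ∧ x = sigmaNeg r n}

/-- The product `∏_{q prime, q > p} 1/(1 - q^{-r})` over all primes greater than `p`. -/
noncomputable def mightyProd (r : ℝ) (p : ℕ) : ℝ :=
  ∏' q : {q : ℕ // q.Prime ∧ p < q}, (1 - ((q : ℕ) : ℝ) ^ (-r))⁻¹

/-- A prime `p` is `r`-mighty if `1 + p^{-r} > ∏_{q prime, q > p} 1/(1 - q^{-r})`. -/
def IsMighty (r : ℝ) (p : ℕ) : Prop := 1 + (p : ℝ) ^ (-r) > mightyProd r p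

/-!
For any `p`, a positive integer `n` either has a prime factor `q ≤ p`, and then
`σ_{-r}(n) ≥ 1 + q^{-r} ≥ 1 + p^{-r}`, or has all its prime factors above `p`, and then `σ_{-r}(n)`
is a partial sum of the Euler product `∏_{q > p} (1 - q^{-r})⁻¹`, hence at most that product.
So if `p` is `r`-mighty, the open interval between the product and `1 + p^{-r} = σ_{-r}(p)` misses
the closure of `σ_{-r}(ℕ⁺)`; it separates `σ_{-r}(p)` from `σ_{-r}(1) = 1` and from `σ_{-r}(q)` for
every prime `q > p`. Thus `1` and the values `σ_{-r}(p)`, `p` mighty, lie in pairwise distinct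
connected components.
-/

open Finset

universe u

lemma Multipliable.prod_le_tprod_of_one_le {ι R : Type*} [CommMonoidWithZero R] [PartialOrder R]
    [ZeroLEOneClass R] [PosMulMono R] [TopologicalSpace R] [OrderClosedTopology R] {f : ι → R}
    (hf : Multipliable f) (h : ∀ i, 1 ≤ f i) (s : Finset ι) : ∏ i ∈ s, f i ≤ ∏' i, f i :=
  (prod_mono_set_of_one_le h).ge_of_tendsto hf.hasProd s

lemma natCast_ncard_add_one_le_mk {α β : Type u} {s : Set α} (f : s ↪ β) {x : β}
    (hx : x ∉ Set.range f) : ((s.ncard + 1 : ℕ) : Cardinal) ≤ Cardinal.mk β :=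
  calc ((s.ncard + 1 : ℕ) : Cardinal) = (Cardinal.mk s).toNat + 1 := by
        rw [← Nat.card_coe_set_eq, Nat.card]; push_cast; rfl
    _ ≤ Cardinal.mk s + 1 := add_le_add_left (Cardinal.natCast_toNat_le _) 1
    _ = Cardinal.mk (Option s) := Cardinal.mk_option.symm
    _ ≤ Cardinal.mk β := Cardinal.mk_le_of_injective (f.optionElim x hx).injective

lemma ConnectedComponents.mk_ne_mk_of_lt_of_notMem {A : Set ℝ} {x y : A} {c : ℝ}
    (hxc : x < c) (hcy : c < y) (hc : c ∉ A) :
    ConnectedComponents.mk x ≠ ConnectedComponents.mk y := by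
  intro h
  have hy : y ∈ connectedComponent x := ConnectedComponents.coe_eq_coe.1 h ▸ mem_connectedComponent
  have hK : IsPreconnected ((↑) '' connectedComponent x : Set ℝ) :=
    isPreconnected_connectedComponent.image _ continuous_subtype_val.continuousOn
  obtain ⟨z, -, rfl⟩ := hK.ordConnected.out ⟨x, mem_connectedComponent, rfl⟩ ⟨y, hy, rfl⟩
    ⟨hxc.le, hcy.le⟩
  exact hc z.2

section

variable {r : ℝ}

lemma one_le_inv_one_sub_rpow_neg {q : ℕ} (hq : 1 < q) (hr : 0 < r) :
    1 ≤ (1 - (q : ℝ) ^ (-r))⁻¹ := by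
  have hlt : (q : ℝ) ^ (-r) < 1 :=
    Real.rpow_lt_one_of_one_lt_of_neg (by exact_mod_cast hq) (neg_lt_zero.2 hr)
  have hnonneg : 0 ≤ (q : ℝ) ^ (-r) := by positivity
  exact (one_le_inv₀ (by linarith)).2 (by linarith)

lemma summable_log_inv_one_sub_rpow_neg (hr : 1 < r) :
    Summable fun n : ℕ ↦ Real.log (1 - (n : ℝ) ^ (-r))⁻¹ := by
  have := (Real.summable_log_one_add_of_summable
    (Real.summable_nat_rpow.2 (neg_lt_neg hr)).neg).neg
  simpa [Real.log_inv, sub_eq_add_neg] using this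

lemma multipliable_mightyProd (hr : 1 < r) (p : ℕ) :
    Multipliable fun q : {q : ℕ // q.Prime ∧ p < q} ↦ (1 - ((q : ℕ) : ℝ) ^ (-r))⁻¹ :=
  Real.multipliable_of_summable_log
    (fun q ↦ zero_lt_one.trans_le (one_le_inv_one_sub_rpow_neg q.2.1.one_lt (by linarith)))
    ((summable_log_inv_one_sub_rpow_neg hr).comp_injective Subtype.val_injective)

lemma prod_le_mightyProd (hr : 1 < r) {p : ℕ} {s : Finset ℕ} (hs : ∀ q ∈ s, q.Prime ∧ p < q) :
    ∏ q ∈ s, (1 - (q : ℝ) ^ (-r))⁻¹ ≤ mightyProd r p := by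
  classical
  rw [← prod_subtype_of_mem _ hs]
  exact (multipliable_mightyProd hr p).prod_le_tprod_of_one_le
    (fun q ↦ one_le_inv_one_sub_rpow_neg q.2.1.one_lt (by linarith)) _

noncomputable def rpowNegHom (r : ℝ) : ℕ →* ℝ where
  toFun n := (n : ℝ) ^ (-r)
  map_one' := by simp
  map_mul' m n := by
    push_cast
    exact Real.mul_rpow (Nat.cast_nonneg _) (Nat.cast_nonneg _)

lemma sigmaNeg_le_prod_primeFactors (hr : 1 < r) {n : ℕ} (hn : n ≠ 0) :
    sigmaNeg r n ≤ ∏ q ∈ n.primeFactors, (1 - (q : ℝ) ^ (-r))⁻¹ := by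
  classical
  have hsum : Summable (rpowNegHom r) := Real.summable_nat_rpow.2 (neg_lt_neg hr)
  have heuler :=
    EulerProduct.prod_filter_prime_geometric_eq_tsum_factoredNumbers hsum n.primeFactors
  rw [filter_true_of_mem fun q hq ↦ Nat.prime_of_mem_primeFactors hq] at heuler
  have hdiv : ∀ d ∈ n.divisors, d ∈ Nat.factoredNumbers n.primeFactors := fun d hd ↦
    Nat.mem_factoredNumbers_of_primeFactors_subset (Nat.pos_of_mem_divisors hd).ne'
      (Nat.primeFactors_mono (Nat.dvd_of_mem_divisors hd) hn)
  calc sigmaNeg r n = ∑ d ∈ n.divisors.subtype (· ∈ Nat.factoredNumbers n.primeFactors),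
        rpowNegHom r d := (sum_subtype_of_mem _ hdiv).symm
    _ ≤ ∑' m : Nat.factoredNumbers n.primeFactors, rpowNegHom r m :=
        (hsum.subtype _).sum_le_tsum _ fun m _ ↦ Real.rpow_nonneg (Nat.cast_nonneg _) _
    _ = _ := heuler.symm

lemma sigmaNeg_le_mightyProd (hr : 1 < r) {p n : ℕ} (hn : n ≠ 0)
    (h : ∀ q ∈ n.primeFactors, p < q) : sigmaNeg r n ≤ mightyProd r p :=
  (sigmaNeg_le_prod_primeFactors hr hn).trans
    (prod_le_mightyProd hr fun q hq ↦ ⟨Nat.prime_of_mem_primeFactors hq, h q hq⟩)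

lemma sigmaNeg_prime {p : ℕ} (hp : p.Prime) : sigmaNeg r p = 1 + (p : ℝ) ^ (-r) := by
  rw [sigmaNeg, hp.divisors, sum_pair hp.one_lt.ne]
  norm_num

lemma one_add_rpow_neg_le_sigmaNeg {q n : ℕ} (hq : q ≠ 1) (hqn : q ∣ n) (hn : n ≠ 0) :
    1 + (q : ℝ) ^ (-r) ≤ sigmaNeg r n := by
  have hsub : ({1, q} : Finset ℕ) ⊆ n.divisors := by
    simp [insert_subset_iff, hqn, hn]
  calc 1 + (q : ℝ) ^ (-r) = ∑ d ∈ {1, q}, (d : ℝ) ^ (-r) := by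
        rw [sum_pair (Ne.symm hq)]; norm_num
    _ ≤ sigmaNeg r n :=
        sum_le_sum_of_subset_of_nonneg hsub fun d _ _ ↦ Real.rpow_nonneg (Nat.cast_nonneg d) _

lemma closure_sigmaSet_subset (hr : 1 < r) (p : ℕ) :
    closure (sigmaSet r) ⊆ Set.Iic (mightyProd r p) ∪ Set.Ici (1 + (p : ℝ) ^ (-r)) := by
  refine closure_minimal ?_ (isClosed_Iic.union isClosed_Ici)
  rintro x ⟨n, hn, rfl⟩
  by_cases h : ∀ q ∈ n.primeFactors, p < q
  · exact Or.inl (sigmaNeg_le_mightyProd hr hn.ne' h)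
  push Not at h
  obtain ⟨q, hqn, hqp⟩ := h
  have hq := Nat.prime_of_mem_primeFactors hqn
  right
  calc 1 + (p : ℝ) ^ (-r) ≤ 1 + (q : ℝ) ^ (-r) := by
        gcongr 1
        exact Real.rpow_le_rpow_of_nonpos (by exact_mod_cast hq.pos) (by exact_mod_cast hqp)
          (by linarith)
    _ ≤ sigmaNeg r n := one_add_rpow_neg_le_sigmaNeg hq.one_lt.ne'
        (Nat.dvd_of_mem_primeFactors hqn) hn.ne'

noncomputable def sigmaComponent (r : ℝ) (n : ℕ) (hn : 0 < n) :
    ConnectedComponents (closure (sigmaSet r)) :=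
  ConnectedComponents.mk ⟨sigmaNeg r n, subset_closure ⟨n, hn, rfl⟩⟩

lemma sigmaComponent_ne_of_isMighty (hr : 1 < r) {p k : ℕ} (hp : p.Prime) (hm : IsMighty r p)
    (hk : 0 < k) (hpk : ∀ q ∈ k.primeFactors, p < q) :
    sigmaComponent r k hk ≠ sigmaComponent r p hp.pos := by
  obtain ⟨c, hpc, hcp⟩ := exists_between hm
  have hc : c ∉ closure (sigmaSet r) := fun hc ↦ by
    rcases closure_sigmaSet_subset hr p hc with h | h
    exacts [hpc.not_ge h, hcp.not_ge h]
  refine ConnectedComponents.mk_ne_mk_of_lt_of_notMem ?_ ?_ hc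
  · exact (sigmaNeg_le_mightyProd hr hk.ne' hpk).trans_lt hpc
  · exact hcp.trans_eq (sigmaNeg_prime hp).symm

end

/-- The number of connected components of the closure of `σ_{-r}(ℕ⁺)` is at least `N_r + 1`,
where `N_r` is the number of `r`-mighty primes. -/
theorem stmt_1 (r : ℝ) (hr : 1 < r) :
    (({p : ℕ | p.Prime ∧ IsMighty r p}.ncard + 1 : ℕ) : Cardinal) ≤
      Cardinal.mk (ConnectedComponents ↥(closure (sigmaSet r))) := by
  set M := {p : ℕ | p.Prime ∧ IsMighty r p}
  have hsep {p q : M} (hpq : (p : ℕ) < q) :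
      sigmaComponent r q q.2.1.pos ≠ sigmaComponent r p p.2.1.pos :=
    sigmaComponent_ne_of_isMighty hr p.2.1 p.2.2 _ (by simpa [q.2.1.primeFactors] using hpq)
  let f : M ↪ ConnectedComponents (closure (sigmaSet r)) :=
    ⟨fun p ↦ sigmaComponent r p p.2.1.pos, fun p q hpq ↦ by
      by_contra hne
      rcases lt_or_gt_of_ne (Subtype.coe_injective.ne hne) with h | h
      exacts [hsep h hpq.symm, hsep h hpq]⟩
  refine natCast_ncard_add_one_le_mk f (x := sigmaComponent r 1 one_pos) ?_
  rintro ⟨p, hp⟩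
  exact sigmaComponent_ne_of_isMighty hr p.2.1 p.2.2 one_pos (by simp) hp.symm
end

section
/- Let r > 1 be a real number, let m be a positive integer, let Q = p_m be the m-th prime, and set S := S_{1,m}(r) = ∑_{t=m+1}^∞ p_t^{−r}. Assume S < 1. If S < 1/(Q^r + 1), then Q is r-mighty. -/
open scoped BigOperators

/-- `S_{1,m}(r) = ∑_{q prime, q > p} q^{-r}`, the sum over all primes greater than `p = p_m`. -/
noncomputable def S1 (r : ℝ) (p : ℕ) : ℝ :=
  ∑' q : {q : ℕ // q.Prime ∧ p < q}, ((q : ℕ) : ℝ) ^ (-r)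

/-
If `S < 1` bounds every partial sum of `∑ q^{-r}`, the Weierstrass product inequality
`∏ (1 - x_q) ≥ 1 - ∑ x_q` gives `∏ 1/(1 - q^{-r}) ≤ 1/(1 - S)`, and
`1/(1 - S) < 1 + Q^{-r}` is a rearrangement of `S < 1/(Q^r + 1)`.
-/

theorem Finset.one_sub_sum_le_prod_one_sub {ι R : Type*} [CommRing R] [LinearOrder R]
    [IsStrictOrderedRing R] (s : Finset ι) (x : ι → R) (hx₀ : ∀ i ∈ s, 0 ≤ x i)
    (hx₁ : ∀ i ∈ s, x i ≤ 1) : 1 - ∑ i ∈ s, x i ≤ ∏ i ∈ s, (1 - x i) := by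
  classical
  induction s using Finset.induction with
  | empty => simp
  | insert a s ha ih =>
    rw [sum_insert ha, prod_insert ha]
    have ih := ih (fun i hi ↦ hx₀ i (mem_insert_of_mem hi))
      (fun i hi ↦ hx₁ i (mem_insert_of_mem hi))
    have hxa₀ := hx₀ a (mem_insert_self a s)
    have hxa₁ := hx₁ a (mem_insert_self a s)
    have hsum : 0 ≤ ∑ i ∈ s, x i := sum_nonneg fun i hi ↦ hx₀ i (mem_insert_of_mem hi)
    nlinarith

theorem tprod_inv_one_sub_le_inv_one_sub_tsum {ι : Type*} {x : ι → ℝ} (hx₀ : ∀ i, 0 ≤ x i)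
    (hx : Summable x) (hx₁ : ∑' i, x i < 1) : ∏' i, (1 - x i)⁻¹ ≤ (1 - ∑' i, x i)⁻¹ := by
  have hpos : 0 < 1 - ∑' i, x i := sub_pos.2 hx₁
  have hone : 1 ≤ (1 - ∑' i, x i)⁻¹ :=
    (one_le_inv₀ hpos).2 (by linarith [(tsum_nonneg hx₀ : 0 ≤ ∑' i, x i)])
  refine tprod_le_of_prod_le' hone fun s ↦ ?_
  rw [Finset.prod_inv_distrib]
  refine inv_anti₀ hpos ?_
  calc 1 - ∑' i, x i ≤ 1 - ∑ i ∈ s, x i := by linarith [hx.sum_le_tsum s fun i _ ↦ hx₀ i]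
    _ ≤ ∏ i ∈ s, (1 - x i) :=
      s.one_sub_sum_le_prod_one_sub x (fun i _ ↦ hx₀ i)
        fun i _ ↦ (hx.le_tsum i fun j _ ↦ hx₀ j).trans hx₁.le

theorem inv_one_sub_lt_one_add_inv {a S : ℝ} (ha : 0 < a) (hS : S < 1 / (a + 1)) :
    (1 - S)⁻¹ < 1 + a⁻¹ := by
  have hlt : a / (a + 1) < 1 - S := by
    have : a / (a + 1) + 1 / (a + 1) = 1 := by field_simp
    linarith
  calc (1 - S)⁻¹ < (a / (a + 1))⁻¹ := inv_strictAnti₀ (by positivity) hlt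
    _ = 1 + a⁻¹ := by field_simp

theorem summable_rpow_neg_primes_gt {r : ℝ} (hr : 1 < r) (p : ℕ) :
    Summable fun q : {q : ℕ // q.Prime ∧ p < q} ↦ ((q : ℕ) : ℝ) ^ (-r) :=
  (Real.summable_nat_rpow.2 (by linarith)).comp_injective Subtype.coe_injective

theorem mightyProd_le_inv_one_sub_S1 {r : ℝ} (hr : 1 < r) {p : ℕ} (hS : S1 r p < 1) :
    mightyProd r p ≤ (1 - S1 r p)⁻¹ :=
  tprod_inv_one_sub_le_inv_one_sub_tsum (fun _ ↦ Real.rpow_nonneg (Nat.cast_nonneg _) _)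
    (summable_rpow_neg_primes_gt hr p) hS

theorem isMighty_of_S1_lt {r : ℝ} (hr : 1 < r) {p : ℕ} (hp : 0 < p)
    (hS : S1 r p < 1 / ((p : ℝ) ^ r + 1)) : IsMighty r p := by
  have hpr : 0 < (p : ℝ) ^ r := Real.rpow_pos_of_pos (Nat.cast_pos.2 hp) r
  have hS1 : S1 r p < 1 := hS.trans_le (div_le_one_of_le₀ (by linarith) (by linarith))
  calc mightyProd r p ≤ (1 - S1 r p)⁻¹ := mightyProd_le_inv_one_sub_S1 hr hS1
    _ < 1 + ((p : ℝ) ^ r)⁻¹ := inv_one_sub_lt_one_add_inv hpr hS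
    _ = 1 + (p : ℝ) ^ (-r) := by rw [Real.rpow_neg (Nat.cast_nonneg p)]

theorem stmt_6_general (r : ℝ) (hr : 1 < r) (m : ℕ) (Q : ℕ)
    (hQ : Q = Nat.nth Nat.Prime (m - 1)) (S : ℝ) (hS : S = S1 r Q)
    (h : S < 1 / ((Q : ℝ) ^ r + 1)) :
    IsMighty r Q := by
  subst hQ hS
  exact isMighty_of_S1_lt hr (Nat.prime_nth_prime _).pos h

/-- Let `Q = p_m` be prime and `S = S_{1,m}(r) < 1`. If `S < 1/(Q^r + 1)` then `Q` is
`r`-mighty. -/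
theorem stmt_6 (r : ℝ) (hr : 1 < r) (m : ℕ) (hm : 0 < m) (Q : ℕ)
    (hQ : Q = Nat.nth Nat.Prime (m - 1)) (S : ℝ) (hS : S = S1 r Q) (hS1 : S < 1)
    (h : S < 1 / ((Q : ℝ) ^ r + 1)) :
    IsMighty r Q :=
  stmt_6_general r hr m Q hQ S hS h
end
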